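/- Let v be C² and φ positive C² on Ω ⊂ ℝ², δ ≠ 0, and define v₁ = δ⁻¹ φ² ∂_y v, v₂ = −δ⁻¹ φ² ∂_x v, w₁ = φ² v, w₂ = v₂ + i v₁. If div(φ²∇v) + δ²φ²v = 0 on Ω, then with α = ∂̄(log φ) (where ∂̄ = (∂_x + i∂_y)/2), the functions satisfy ∂̄w₁ = 2α w₁ − (δ/2) conj(w₂) and ∂̄w₂ = (δ/2) w₁ + α w₂ − conj(α) conj(w₂) on Ω. -/

import Mathlib

noncomputable def pdx (f : ℝ × ℝ → ℝ) (p : ℝ × ℝ) : ℝ := deriv (fun x => f (x, p.2)) p.1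
noncomputable def pdy (f : ℝ × ℝ → ℝ) (p : ℝ × ℝ) : ℝ := deriv (fun y => f (p.1, y)) p.2

noncomputable def pdxC (f : ℝ × ℝ → ℂ) (p : ℝ × ℝ) : ℂ := deriv (fun x => f (x, p.2)) p.1
noncomputable def pdyC (f : ℝ × ℝ → ℂ) (p : ℝ × ℝ) : ℂ := deriv (fun y => f (p.1, y)) p.2

/-- The Cauchy–Riemann operator `∂̄ = ½(∂ₓ + i ∂_y)` on `ℝ² ≅ ℂ`. -/
noncomputable def dbar (f : ℝ × ℝ → ℂ) (p : ℝ × ℝ) : ℂ :=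
  (pdxC f p + Complex.I * pdyC f p) / 2

/-!
Every identity is pointwise. Writing `∂̄(log φ) = (φₓ + i φ_y) / (2φ)` and expanding `∂̄` of the
products `φ² v`, `φ² vₓ`, `φ² v_y` by the product rule, both sides become explicit expressions in
`φ, v` and their first and second partial derivatives at the point. The real part of the second
equation is the divergence equation `(φ² vₓ)ₓ + (φ² v_y)_y = -δ² φ² v`; its imaginary part holds
because the mixed partials `v_xy` and `v_yx` of the `C²` function `v` agree.
-/

open Filter Topology Complex

section Slices

variable {E : Type*} [NormedAddCommGroup E] [NormedSpace ℝ E] {f : ℝ × ℝ → E} {p : ℝ × ℝ}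

theorem DifferentiableAt.hasDerivAt_slice_fst (hf : DifferentiableAt ℝ f p) :
    HasDerivAt (fun x => f (x, p.2)) (fderiv ℝ f p (1, 0)) p.1 :=
  hf.hasFDerivAt.comp_hasDerivAt p.1 ((hasDerivAt_id p.1).prodMk (hasDerivAt_const p.1 p.2))

theorem DifferentiableAt.hasDerivAt_slice_snd (hf : DifferentiableAt ℝ f p) :
    HasDerivAt (fun y => f (p.1, y)) (fderiv ℝ f p (0, 1)) p.2 :=
  hf.hasFDerivAt.comp_hasDerivAt p.2 ((hasDerivAt_const p.2 p.1).prodMk (hasDerivAt_id p.2))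

end Slices

theorem ContDiffAt.hasFDerivAt_fderiv_apply {𝕜 E F : Type*} [NontriviallyNormedField 𝕜]
    [NormedAddCommGroup E] [NormedSpace 𝕜 E] [NormedAddCommGroup F] [NormedSpace 𝕜 F]
    {f : E → F} {p : E} (hf : ContDiffAt 𝕜 2 f p) (u : E) :
    HasFDerivAt (fun q => fderiv 𝕜 f q u) ((fderiv 𝕜 (fderiv 𝕜 f) p).flip u) p :=
  ((hf.fderiv_right (m := 1) (by norm_num)).differentiableAt one_ne_zero).hasFDerivAt.clm_apply
    (hasFDerivAt_const u p) |>.congr_fderiv (by ext; simp)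

section PartialDerivatives

variable {f g : ℝ × ℝ → ℝ} {p : ℝ × ℝ}

theorem pdx_eq_fderiv (hf : DifferentiableAt ℝ f p) : pdx f p = fderiv ℝ f p (1, 0) :=
  hf.hasDerivAt_slice_fst.deriv

theorem pdy_eq_fderiv (hf : DifferentiableAt ℝ f p) : pdy f p = fderiv ℝ f p (0, 1) :=
  hf.hasDerivAt_slice_snd.deriv

theorem hasDerivAt_pdx (hf : DifferentiableAt ℝ f p) :
    HasDerivAt (fun x => f (x, p.2)) (pdx f p) p.1 := by
  simpa only [pdx_eq_fderiv hf] using hf.hasDerivAt_slice_fst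

theorem hasDerivAt_pdy (hf : DifferentiableAt ℝ f p) :
    HasDerivAt (fun y => f (p.1, y)) (pdy f p) p.2 := by
  simpa only [pdy_eq_fderiv hf] using hf.hasDerivAt_slice_snd

theorem pdx_log (hf : DifferentiableAt ℝ f p) (hp : f p ≠ 0) :
    pdx (fun q => Real.log (f q)) p = pdx f p / f p :=
  ((hasDerivAt_pdx hf).log hp).deriv

theorem pdy_log (hf : DifferentiableAt ℝ f p) (hp : f p ≠ 0) :
    pdy (fun q => Real.log (f q)) p = pdy f p / f p :=
  ((hasDerivAt_pdy hf).log hp).deriv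

theorem fderiv_const_mul_sq_mul_apply (c : ℝ) (hf : DifferentiableAt ℝ f p)
    (hg : DifferentiableAt ℝ g p) (u : ℝ × ℝ) :
    fderiv ℝ (fun q => c * f q ^ 2 * g q) p u
      = c * (2 * f p * fderiv ℝ f p u * g p + f p ^ 2 * fderiv ℝ g p u) := by
  rw [(((hf.hasFDerivAt.pow 2).const_mul c).fun_mul hg.hasFDerivAt).fderiv]
  simp only [_root_.add_apply, _root_.smul_apply, smul_eq_mul]
  ring

theorem pdx_const_mul_sq_mul (c : ℝ) (hf : DifferentiableAt ℝ f p)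
    (hg : DifferentiableAt ℝ g p) :
    pdx (fun q => c * f q ^ 2 * g q) p = c * (2 * f p * pdx f p * g p + f p ^ 2 * pdx g p) := by
  rw [pdx_eq_fderiv (by fun_prop), pdx_eq_fderiv hf, pdx_eq_fderiv hg,
    fderiv_const_mul_sq_mul_apply c hf hg]

theorem pdy_const_mul_sq_mul (c : ℝ) (hf : DifferentiableAt ℝ f p)
    (hg : DifferentiableAt ℝ g p) :
    pdy (fun q => c * f q ^ 2 * g q) p = c * (2 * f p * pdy f p * g p + f p ^ 2 * pdy g p) := by
  rw [pdy_eq_fderiv (by fun_prop), pdy_eq_fderiv hf, pdy_eq_fderiv hg,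
    fderiv_const_mul_sq_mul_apply c hf hg]

theorem pdx_sq_mul (hf : DifferentiableAt ℝ f p) (hg : DifferentiableAt ℝ g p) :
    pdx (fun q => f q ^ 2 * g q) p = 2 * f p * pdx f p * g p + f p ^ 2 * pdx g p := by
  simpa using pdx_const_mul_sq_mul 1 hf hg

theorem pdy_sq_mul (hf : DifferentiableAt ℝ f p) (hg : DifferentiableAt ℝ g p) :
    pdy (fun q => f q ^ 2 * g q) p = 2 * f p * pdy f p * g p + f p ^ 2 * pdy g p := by
  simpa using pdy_const_mul_sq_mul 1 hf hg

theorem ContDiffAt.hasFDerivAt_pdx (hf : ContDiffAt ℝ 2 f p) :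
    HasFDerivAt (pdx f) ((fderiv ℝ (fderiv ℝ f) p).flip (1, 0)) p :=
  (hf.hasFDerivAt_fderiv_apply _).congr_of_eventuallyEq <|
    (hf.eventually (by simp)).mono fun _ hq => pdx_eq_fderiv (hq.differentiableAt two_ne_zero)

theorem ContDiffAt.hasFDerivAt_pdy (hf : ContDiffAt ℝ 2 f p) :
    HasFDerivAt (pdy f) ((fderiv ℝ (fderiv ℝ f) p).flip (0, 1)) p :=
  (hf.hasFDerivAt_fderiv_apply _).congr_of_eventuallyEq <|
    (hf.eventually (by simp)).mono fun _ hq => pdy_eq_fderiv (hq.differentiableAt two_ne_zero)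

theorem ContDiffAt.pdx_pdy_comm (hf : ContDiffAt ℝ 2 f p) : pdx (pdy f) p = pdy (pdx f) p := by
  rw [pdx_eq_fderiv hf.hasFDerivAt_pdy.differentiableAt, hf.hasFDerivAt_pdy.fderiv,
    pdy_eq_fderiv hf.hasFDerivAt_pdx.differentiableAt, hf.hasFDerivAt_pdx.fderiv]
  exact (hf.isSymmSndFDerivAt (by simp)) _ _

theorem dbar_ofReal (hf : DifferentiableAt ℝ f p) :
    dbar (fun q => (f q : ℂ)) p = (pdx f p + I * pdy f p) / 2 := by
  rw [dbar, pdxC, pdyC, (hasDerivAt_pdx hf).ofReal_comp.deriv,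
    (hasDerivAt_pdy hf).ofReal_comp.deriv]

theorem dbar_ofReal_add_I_mul (hf : DifferentiableAt ℝ f p) (hg : DifferentiableAt ℝ g p) :
    dbar (fun q => (f q : ℂ) + I * (g q : ℂ)) p
      = (pdx f p + I * pdx g p + I * (pdy f p + I * pdy g p)) / 2 := by
  rw [dbar, pdxC, pdyC,
    ((hasDerivAt_pdx hf).ofReal_comp.fun_add ((hasDerivAt_pdx hg).ofReal_comp.const_mul I)).deriv,
    ((hasDerivAt_pdy hf).ofReal_comp.fun_add ((hasDerivAt_pdy hg).ofReal_comp.const_mul I)).deriv]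

end PartialDerivatives

theorem beltrami_system (Ω : Set (ℝ × ℝ)) (hΩ : IsOpen Ω)
    (v φ : ℝ × ℝ → ℝ) (δ : ℝ) (hδ : δ ≠ 0)
    (hv : ContDiffOn ℝ 2 v Ω) (hφ : ContDiffOn ℝ 2 φ Ω)
    (hφpos : ∀ p ∈ Ω, 0 < φ p)
    (heq : ∀ p ∈ Ω,
      pdx (fun q => φ q ^ 2 * pdx v q) p + pdy (fun q => φ q ^ 2 * pdy v q) p
        + δ ^ 2 * φ p ^ 2 * v p = 0) :
    ∀ p ∈ Ω,
      dbar (fun q => ((φ q ^ 2 * v q : ℝ) : ℂ)) p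
          = 2 * dbar (fun q => ((Real.log (φ q) : ℝ) : ℂ)) p
              * ((φ p ^ 2 * v p : ℝ) : ℂ)
            - (δ / 2 : ℂ) * (starRingEnd ℂ)
                (((-(δ⁻¹) * φ p ^ 2 * pdx v p : ℝ) : ℂ)
                  + Complex.I * ((δ⁻¹ * φ p ^ 2 * pdy v p : ℝ) : ℂ)) ∧
      dbar (fun q => ((-(δ⁻¹) * φ q ^ 2 * pdx v q : ℝ) : ℂ)
              + Complex.I * ((δ⁻¹ * φ q ^ 2 * pdy v q : ℝ) : ℂ)) p
          = (δ / 2 : ℂ) * ((φ p ^ 2 * v p : ℝ) : ℂ)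
            + dbar (fun q => ((Real.log (φ q) : ℝ) : ℂ)) p
                * (((-(δ⁻¹) * φ p ^ 2 * pdx v p : ℝ) : ℂ)
                  + Complex.I * ((δ⁻¹ * φ p ^ 2 * pdy v p : ℝ) : ℂ))
            - (starRingEnd ℂ) (dbar (fun q => ((Real.log (φ q) : ℝ) : ℂ)) p)
                * (starRingEnd ℂ)
                  (((-(δ⁻¹) * φ p ^ 2 * pdx v p : ℝ) : ℂ)
                    + Complex.I * ((δ⁻¹ * φ p ^ 2 * pdy v p : ℝ) : ℂ)) := by
  intro p hp
  have hv2 : ContDiffAt ℝ 2 v p := hv.contDiffAt (hΩ.mem_nhds hp)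
  have hφ2 : ContDiffAt ℝ 2 φ p := hφ.contDiffAt (hΩ.mem_nhds hp)
  have hvd := hv2.differentiableAt two_ne_zero
  have hφd := hφ2.differentiableAt two_ne_zero
  have hvx := hv2.hasFDerivAt_pdx.differentiableAt
  have hvy := hv2.hasFDerivAt_pdy.differentiableAt
  have hφ0 : φ p ≠ 0 := (hφpos p hp).ne'
  have hdiv := heq p hp
  rw [pdx_sq_mul hφd hvx, pdy_sq_mul hφd hvy] at hdiv
  rw [dbar_ofReal (by fun_prop), dbar_ofReal (hφd.log hφ0),
    dbar_ofReal_add_I_mul (by fun_prop) (by fun_prop), pdx_log hφd hφ0, pdy_log hφd hφ0,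
    pdx_sq_mul hφd hvd, pdy_sq_mul hφd hvd, pdx_const_mul_sq_mul _ hφd hvx,
    pdy_const_mul_sq_mul _ hφd hvx, pdx_const_mul_sq_mul _ hφd hvy,
    pdy_const_mul_sq_mul _ hφd hvy, hv2.pdx_pdy_comm]
  refine ⟨Complex.ext ?_ ?_, Complex.ext ?_ ?_⟩ <;>
    simp only [Complex.add_re, Complex.add_im, Complex.sub_re, Complex.sub_im,
      Complex.mul_re, Complex.mul_im, Complex.div_re, Complex.div_im, Complex.I_re, Complex.I_im,
      Complex.ofReal_re, Complex.ofReal_im, Complex.conj_re, Complex.conj_im, Complex.normSq_apply,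
      Complex.re_ofNat, Complex.im_ofNat, mul_zero, zero_mul, sub_zero, zero_sub, add_zero,
      zero_add] <;>
    field_simp
  · ring
  · ring
  · linear_combination (-2) * hdiv
  · ring
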